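/- arXiv:1801.07439 — 3 statements merged into one kernel-verified Lean document; each statement's English description precedes it below -/
import Mathlib

section
/- Let E be a normed space of tempered distributions on ℝ^d, continuously included in S'(ℝ^d), such that for all λ > 0, e ∈ ℝ^d and a ∈ E one has ‖a(λ· − e)‖_E ≤ C₀ λ^{−σ} ‖a‖_E. Then there exists C₁ such that for all a ∈ E and all t > 0, ‖e^{tΔ}a‖_{L^∞} ≤ C₁ t^{−σ/2} ‖a‖_E; i.e. ‖a‖_{Ḃ^{−σ}_{∞,∞}} ≤ C₁ ‖a‖_E. -/
open Real MeasureTheory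

/-- Meyer's lemma: if `E` is a normed space of (function realizations of) tempered
distributions on `ℝ^d`, continuously included in `𝒮'` (tested against the Gaussian),
stable by translations and dilations with `‖a(λ· - e)‖_E ≤ C₀ λ^{-σ} ‖a‖_E`, then
`‖e^{tΔ}a‖_{L^∞} ≤ C₁ t^{-σ/2} ‖a‖_E`, i.e. `‖a‖_{Ḃ^{-σ}_{∞,∞}} ≤ C₁ ‖a‖_E`. -/
theorem smallest_norm_besov {d : ℕ} (hd : 1 ≤ d) {E : Type*}
    [NormedAddCommGroup E] [NormedSpace ℝ E]
    (σ C₀ : ℝ)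
    (ι : E →ₗ[ℝ] (EuclideanSpace ℝ (Fin d) → ℝ))
    (hInt : ∀ a, Integrable (ι a))
    (hS' : ∃ C : ℝ, ∀ a : E, |∫ x, ι a x * Real.exp (-‖x‖ ^ 2)| ≤ C * ‖a‖)
    (hstable : ∀ lam : ℝ, 0 < lam → ∀ (e : EuclideanSpace ℝ (Fin d)) (a : E),
      ∃ b : E, (ι b = fun x => ι a (lam • x - e)) ∧ ‖b‖ ≤ C₀ * lam ^ (-σ) * ‖a‖) :
    ∃ C₁ : ℝ, ∀ (a : E) (t : ℝ), 0 < t → ∀ x : EuclideanSpace ℝ (Fin d),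
      |∫ y, (4 * π * t) ^ (-(d : ℝ) / 2) * Real.exp (-‖x - y‖ ^ 2 / (4 * t)) * ι a y|
        ≤ C₁ * t ^ (-σ / 2) * ‖a‖ := by
  obtain ⟨C, hC⟩ := hS'
  refine ⟨π ^ (-(d : ℝ) / 2) * |C| * C₀ * 2 ^ (-σ), ?_⟩
  intro a t ht x
  set lam : ℝ := 2 * Real.sqrt t with hlamdef
  have hst : 0 < Real.sqrt t := Real.sqrt_pos.2 ht
  have hlampos : 0 < lam := by positivity
  have hlamsq : lam ^ 2 = 4 * t := by
    rw [hlamdef, mul_pow, Real.sq_sqrt ht.le]; ring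
  obtain ⟨b, hb, hbnorm⟩ := hstable lam hlampos (-x) a
  set F : EuclideanSpace ℝ (Fin d) → ℝ :=
    fun y => ι a y * Real.exp (-‖x - y‖ ^ 2 / (4 * t)) with hF
  -- step 1 : ∫ ι b z * exp (-‖z‖²) = ∫ F (lam • z + x)
  have h1 : ∫ z, ι b z * Real.exp (-‖z‖ ^ 2) = ∫ z, F (lam • z + x) := by
    congr 1
    ext z
    have hbz : ι b z = ι a (lam • z + x) := by rw [hb]; simp [sub_neg_eq_add]
    have hnorm : ‖x - (lam • z + x)‖ ^ 2 = lam ^ 2 * ‖z‖ ^ 2 := by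
      have : x - (lam • z + x) = -(lam • z) := by abel
      rw [this, norm_neg, norm_smul, Real.norm_eq_abs, abs_of_pos hlampos, mul_pow]
    rw [hF]
    simp only [hbz, hnorm, hlamsq]
    congr 2
    field_simp
  -- step 2 : change of variables
  have h2 : ∫ z, F (lam • z + x) = (lam ^ d)⁻¹ * ∫ y, F y := by
    have := MeasureTheory.Measure.integral_comp_smul (volume : Measure (EuclideanSpace ℝ (Fin d)))
      (fun w => F (w + x)) lam
    simp only [finrank_euclideanSpace_fin, smul_eq_mul] at this
    rw [show (fun z => F (lam • z + x)) = (fun z => (fun w => F (w + x)) (lam • z)) from rfl] at *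
    rw [this, integral_add_right_eq_self F x, abs_of_nonneg (by positivity)]
  -- combine
  have hkey : ∫ y, (4 * π * t) ^ (-(d : ℝ) / 2) * Real.exp (-‖x - y‖ ^ 2 / (4 * t)) * ι a y
      = ((4 * π * t) ^ (-(d : ℝ) / 2) * lam ^ d) * ∫ z, ι b z * Real.exp (-‖z‖ ^ 2) := by
    have hne : (lam : ℝ) ^ d ≠ 0 := by positivity
    have e1 : ∫ y, (4 * π * t) ^ (-(d : ℝ) / 2) * Real.exp (-‖x - y‖ ^ 2 / (4 * t)) * ι a y
        = (4 * π * t) ^ (-(d : ℝ) / 2) * ∫ y, F y := by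
      rw [← integral_const_mul]
      apply integral_congr_ae
      filter_upwards with y
      rw [hF]; ring
    rw [e1, h1, h2]
    field_simp
  rw [hkey, abs_mul]
  have hCb : |∫ z, ι b z * Real.exp (-‖z‖ ^ 2)| ≤ |C| * ‖b‖ := by
    calc |∫ z, ι b z * Real.exp (-‖z‖ ^ 2)| ≤ C * ‖b‖ := hC b
      _ ≤ |C| * ‖b‖ := by
        gcongr
        exact le_abs_self C
  have h4πt : (0:ℝ) < 4 * π * t := by positivity
  have hlamd : (lam : ℝ) ^ d = (4 * t) ^ ((d : ℝ) / 2) := by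
    have hlam4 : lam = (4 * t) ^ ((1:ℝ)/2) := by
      rw [← Real.sqrt_eq_rpow, Real.sqrt_mul (by norm_num : (0:ℝ) ≤ 4),
        show Real.sqrt 4 = 2 by
          rw [show (4:ℝ) = 2 ^ 2 by norm_num, Real.sqrt_sq (by norm_num : (0:ℝ) ≤ 2)]]
    rw [hlam4, ← Real.rpow_natCast ((4 * t) ^ ((1:ℝ)/2)) d, ← Real.rpow_mul (by positivity),
      show (1:ℝ)/2 * (d:ℝ) = (d:ℝ)/2 by ring]
  have hconst : |(4 * π * t) ^ (-(d : ℝ) / 2) * lam ^ d| = π ^ (-(d : ℝ) / 2) := by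
    rw [hlamd, abs_of_nonneg (by positivity), neg_div, Real.rpow_neg h4πt.le,
      inv_mul_eq_div, ← Real.div_rpow (by positivity) h4πt.le,
      show 4 * t / (4 * π * t) = π⁻¹ by field_simp; try ring,
      Real.inv_rpow pi_pos.le, ← Real.rpow_neg pi_pos.le]
  have hlamr : lam ^ (-σ) = 2 ^ (-σ) * t ^ (-σ / 2) := by
    rw [hlamdef, Real.mul_rpow (by norm_num) hst.le, Real.sqrt_eq_rpow,
      ← Real.rpow_mul ht.le, show (1:ℝ)/2 * (-σ) = -σ/2 by ring]
  have hb2 : ‖b‖ ≤ C₀ * 2 ^ (-σ) * t ^ (-σ / 2) * ‖a‖ := by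
    calc ‖b‖ ≤ C₀ * lam ^ (-σ) * ‖a‖ := hbnorm
      _ = C₀ * 2 ^ (-σ) * t ^ (-σ / 2) * ‖a‖ := by rw [hlamr]; ring
  rw [hconst]
  have hπ : (0:ℝ) ≤ π ^ (-(d : ℝ) / 2) := Real.rpow_nonneg pi_pos.le _
  calc π ^ (-(d : ℝ) / 2) * |∫ z, ι b z * Real.exp (-‖z‖ ^ 2)|
      ≤ π ^ (-(d : ℝ) / 2) * (|C| * ‖b‖) := by
        exact mul_le_mul_of_nonneg_left hCb hπ
    _ ≤ π ^ (-(d : ℝ) / 2) * (|C| * (C₀ * 2 ^ (-σ) * t ^ (-σ / 2) * ‖a‖)) := by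
        exact mul_le_mul_of_nonneg_left
          (mul_le_mul_of_nonneg_left hb2 (abs_nonneg C)) hπ
    _ = π ^ (-(d : ℝ) / 2) * |C| * C₀ * 2 ^ (-σ) * t ^ (-σ / 2) * ‖a‖ := by ring
end

section
/- For any sufficiently regular function u on ℝ³, one has ‖u‖²_{L^∞_v L⁴_h} ≲ ‖∂₃ u‖_{L²(ℝ³)} ‖∇_h u‖_{L²(ℝ³)}. -/
open Real MeasureTheory Set Filter Topology

lemma my_int_mul {α : Type*} [MeasurableSpace α] {μ : Measure α} {f g : α → ℝ}
    (hfm : AEStronglyMeasurable f μ) (hgm : AEStronglyMeasurable g μ)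
    (hf2 : Integrable (fun x => f x ^ 2) μ) (hg2 : Integrable (fun x => g x ^ 2) μ) :
    Integrable (fun x => f x * g x) μ := by
  refine Integrable.mono' ((hf2.add hg2).div_const 2) (hfm.mul hgm) ?_
  filter_upwards with x
  simp only [Pi.add_apply, Real.norm_eq_abs, abs_mul]
  nlinarith [sq_nonneg (|f x| - |g x|), abs_nonneg (f x), abs_nonneg (g x),
    sq_abs (f x), sq_abs (g x)]

lemma my_cs {α : Type*} [MeasurableSpace α] {μ : Measure α} {f g : α → ℝ}
    (hf : ∀ x, 0 ≤ f x) (hg : ∀ x, 0 ≤ g x)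
    (hfm : AEStronglyMeasurable f μ) (hgm : AEStronglyMeasurable g μ)
    (hf2 : Integrable (fun x => f x ^ 2) μ) (hg2 : Integrable (fun x => g x ^ 2) μ) :
    ∫ x, f x * g x ∂μ ≤ Real.sqrt (∫ x, f x ^ 2 ∂μ) * Real.sqrt (∫ x, g x ^ 2 ∂μ) := by
  set A := ∫ x, f x ^ 2 ∂μ with hA
  set B := ∫ x, g x ^ 2 ∂μ with hB
  have hA0 : 0 ≤ A := integral_nonneg fun x => sq_nonneg _
  have hB0 : 0 ≤ B := integral_nonneg fun x => sq_nonneg _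
  rcases eq_or_lt_of_le hA0 with h | hApos
  · have hf0 : (fun x => f x ^ 2) =ᵐ[μ] 0 := by
      rw [← integral_eq_zero_iff_of_nonneg (fun x => sq_nonneg _) hf2]
      exact h.symm
    have hz : (fun x => f x * g x) =ᵐ[μ] 0 := by
      filter_upwards [hf0] with x hx
      have : f x = 0 := by simpa [pow_eq_zero_iff] using hx
      simp [this]
    rw [integral_congr_ae hz]
    simp only [Pi.zero_apply, integral_zero]
    positivity
  rcases eq_or_lt_of_le hB0 with h | hBpos
  · have hg0 : (fun x => g x ^ 2) =ᵐ[μ] 0 := by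
      rw [← integral_eq_zero_iff_of_nonneg (fun x => sq_nonneg _) hg2]
      exact h.symm
    have hz : (fun x => f x * g x) =ᵐ[μ] 0 := by
      filter_upwards [hg0] with x hx
      have : g x = 0 := by simpa [pow_eq_zero_iff] using hx
      simp [this]
    rw [integral_congr_ae hz]
    simp only [Pi.zero_apply, integral_zero]
    positivity
  · set t := Real.sqrt B / Real.sqrt A with ht
    have hsA : 0 < Real.sqrt A := Real.sqrt_pos.2 hApos
    have hsB : 0 < Real.sqrt B := Real.sqrt_pos.2 hBpos
    have htpos : 0 < t := div_pos hsB hsA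
    have h2 : ∀ x, f x * g x ≤ (t * f x ^ 2 + g x ^ 2 / t) / 2 := by
      intro x
      have hgg : g x ^ 2 / t * t = g x ^ 2 := div_mul_cancel₀ _ (ne_of_gt htpos)
      nlinarith [sq_nonneg (t * f x - g x), htpos, mul_pos htpos htpos]
    have hint : Integrable (fun x => (t * f x ^ 2 + g x ^ 2 / t) / 2) μ :=
      ((hf2.const_mul t).add (hg2.div_const t)).div_const 2
    have step : ∫ x, f x * g x ∂μ ≤ (t * A + B / t) / 2 := by
      have := integral_mono (my_int_mul hfm hgm hf2 hg2) hint h2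
      rwa [integral_div, integral_add (hf2.const_mul t) (hg2.div_const t),
        integral_const_mul, integral_div, ← hA, ← hB] at this
    have hfin : (t * A + B / t) / 2 = Real.sqrt A * Real.sqrt B := by
      have hAe : Real.sqrt A * Real.sqrt A = A := Real.mul_self_sqrt hA0
      have hBe : Real.sqrt B * Real.sqrt B = B := Real.mul_self_sqrt hB0
      rw [ht]
      field_simp
      nlinarith [hAe, hBe]
    linarith [step, hfin.le]
open Real MeasureTheory Set Filter Topology

-- compact support of slices
lemma hcs_slice_h {u : ℝ × ℝ × ℝ → ℝ} (hc : HasCompactSupport u) (t : ℝ) :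
    HasCompactSupport (fun xh : ℝ × ℝ => u (xh.1, xh.2, t)) := by
  refine HasCompactSupport.intro
    (hc.isCompact.image ((continuous_fst.prodMk (continuous_fst.comp continuous_snd))))
    fun xh hxh => ?_
  apply image_eq_zero_of_notMem_tsupport
  intro hmem
  exact hxh ⟨(xh.1, xh.2, t), hmem, rfl⟩

lemma hcs_slice_v {u : ℝ × ℝ × ℝ → ℝ} (hc : HasCompactSupport u) (a b : ℝ) :
    HasCompactSupport (fun z : ℝ => u (a, b, z)) := by
  refine HasCompactSupport.intro (hc.isCompact.image (continuous_snd.comp continuous_snd))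
    fun z hz => ?_
  apply image_eq_zero_of_notMem_tsupport
  intro hmem
  exact hz ⟨(a, b, z), hmem, rfl⟩

lemma hcs_slice_x {u : ℝ × ℝ × ℝ → ℝ} (hc : HasCompactSupport u) (b t : ℝ) :
    HasCompactSupport (fun x : ℝ => u (x, b, t)) := by
  refine HasCompactSupport.intro (hc.isCompact.image continuous_fst) fun x hx => ?_
  apply image_eq_zero_of_notMem_tsupport
  intro hmem
  exact hx ⟨(x, b, t), hmem, rfl⟩

lemma hcs_slice_y {u : ℝ × ℝ × ℝ → ℝ} (hc : HasCompactSupport u) (a t : ℝ) :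
    HasCompactSupport (fun y : ℝ => u (a, y, t)) := by
  refine HasCompactSupport.intro (hc.isCompact.image (continuous_fst.comp continuous_snd))
    fun y hy => ?_
  apply image_eq_zero_of_notMem_tsupport
  intro hmem
  exact hy ⟨(a, y, t), hmem, rfl⟩

-- FTC bound
lemma my_abs_le_integral_deriv {v : ℝ → ℝ} (hv : ContDiff ℝ 1 v)
    (hc : HasCompactSupport v) (t : ℝ) : |v t| ≤ ∫ z, |deriv v z| := by
  have h1 : ∫ z in Set.Iic t, deriv v z = v t := hc.integral_Iic_deriv_eq hv t
  have hd : Integrable (fun z => |deriv v z|) := by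
    exact ((hv.continuous_deriv le_rfl).abs).integrable_of_hasCompactSupport hc.deriv.abs
  calc |v t| = |∫ z in Set.Iic t, deriv v z| := by rw [h1]
    _ ≤ ∫ z in Set.Iic t, |deriv v z| := by
        simpa [Real.norm_eq_abs] using
          norm_integral_le_integral_norm (μ := volume.restrict (Set.Iic t)) (deriv v)
    _ ≤ ∫ z, |deriv v z| :=
        setIntegral_le_integral hd (Eventually.of_forall fun z => abs_nonneg _)

-- derivative of vertical slice
lemma d3_hasDerivAt {u : ℝ × ℝ × ℝ → ℝ} (hu : ContDiff ℝ (⊤ : ℕ∞) u) (p : ℝ × ℝ × ℝ) :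
    HasDerivAt (fun z => u (p.1, p.2.1, z)) (fderiv ℝ u p ((0:ℝ), (0:ℝ), (1:ℝ))) p.2.2 := by
  have H : HasFDerivAt u (fderiv ℝ u p) p := (hu.differentiable (by simp) p).hasFDerivAt
  have line : HasDerivAt (fun z : ℝ => ((p.1 : ℝ), (p.2.1 : ℝ), z)) ((0:ℝ), (0:ℝ), (1:ℝ)) p.2.2 :=
    (hasDerivAt_const _ _).prodMk ((hasDerivAt_const _ _).prodMk (hasDerivAt_id _))
  have := H.comp_hasDerivAt p.2.2 (by simpa using line)
  exact this

lemma d1_hasDerivAt {u : ℝ × ℝ × ℝ → ℝ} (hu : ContDiff ℝ (⊤ : ℕ∞) u) (p : ℝ × ℝ × ℝ) :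
    HasDerivAt (fun x => u (x, p.2.1, p.2.2)) (fderiv ℝ u p ((1:ℝ), (0:ℝ), (0:ℝ))) p.1 := by
  have H : HasFDerivAt u (fderiv ℝ u p) p := (hu.differentiable (by simp) p).hasFDerivAt
  have line : HasDerivAt (fun x : ℝ => (x, (p.2.1 : ℝ), (p.2.2 : ℝ))) ((1:ℝ), (0:ℝ), (0:ℝ)) p.1 :=
    (hasDerivAt_id _).prodMk ((hasDerivAt_const _ _).prodMk (hasDerivAt_const _ _))
  have := H.comp_hasDerivAt p.1 (by simpa using line)
  exact this

lemma d2_hasDerivAt {u : ℝ × ℝ × ℝ → ℝ} (hu : ContDiff ℝ (⊤ : ℕ∞) u) (p : ℝ × ℝ × ℝ) :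
    HasDerivAt (fun y => u (p.1, y, p.2.2)) (fderiv ℝ u p ((0:ℝ), (1:ℝ), (0:ℝ))) p.2.1 := by
  have H : HasFDerivAt u (fderiv ℝ u p) p := (hu.differentiable (by simp) p).hasFDerivAt
  have line : HasDerivAt (fun y : ℝ => ((p.1 : ℝ), y, (p.2.2 : ℝ))) ((0:ℝ), (1:ℝ), (0:ℝ)) p.2.1 :=
    (hasDerivAt_const _ _).prodMk ((hasDerivAt_id _).prodMk (hasDerivAt_const _ _))
  have := H.comp_hasDerivAt p.2.1 (by simpa using line)
  exact this
open Real MeasureTheory Set Filter Topology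

lemma assoc_integrable {h : ℝ × ℝ × ℝ → ℝ} (hcont : Continuous h)
    (hsupp : HasCompactSupport h) :
    Integrable (fun q : (ℝ × ℝ) × ℝ => h (q.1.1, q.1.2, q.2)) := by
  have he : (fun q : (ℝ × ℝ) × ℝ => h (q.1.1, q.1.2, q.2)) = h ∘ (Homeomorph.prodAssoc ℝ ℝ ℝ) :=
    rfl
  rw [he]
  exact (hcont.comp (Homeomorph.prodAssoc ℝ ℝ ℝ).continuous).integrable_of_hasCompactSupport
    (hsupp.comp_homeomorph _)

lemma assoc_integrable' {h : ℝ × ℝ × ℝ → ℝ} (hcont : Continuous h)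
    (hsupp : HasCompactSupport h) :
    Integrable (fun q : (ℝ × ℝ) × ℝ => h (q.1.1, q.1.2, q.2))
      ((volume : Measure (ℝ × ℝ)).prod (volume : Measure ℝ)) := by
  rw [← MeasureTheory.Measure.volume_eq_prod]; exact assoc_integrable hcont hsupp

lemma triple_zfirst {h : ℝ × ℝ × ℝ → ℝ} (hcont : Continuous h)
    (hsupp : HasCompactSupport h) :
    ∫ p : ℝ × ℝ × ℝ, h p = ∫ z : ℝ, ∫ xh : ℝ × ℝ, h (xh.1, xh.2, z) := by
  have hP := MeasureTheory.volume_preserving_prodAssoc (α₁ := ℝ) (β₁ := ℝ) (γ₁ := ℝ)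
  have h1 : ∫ q : (ℝ × ℝ) × ℝ, h (q.1.1, q.1.2, q.2) = ∫ p : ℝ × ℝ × ℝ, h p :=
    hP.integral_comp (MeasurableEquiv.prodAssoc).measurableEmbedding h
  rw [← h1]
  rw [show ((volume : Measure ((ℝ × ℝ) × ℝ))) = (volume : Measure (ℝ × ℝ)).prod volume from
    MeasureTheory.Measure.volume_eq_prod _ _]
  exact integral_prod_symm _ (assoc_integrable' hcont hsupp)

lemma triple_xhfirst {h : ℝ × ℝ × ℝ → ℝ} (hcont : Continuous h)
    (hsupp : HasCompactSupport h) :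
    ∫ p : ℝ × ℝ × ℝ, h p = ∫ xh : ℝ × ℝ, ∫ z : ℝ, h (xh.1, xh.2, z) := by
  have hP := MeasureTheory.volume_preserving_prodAssoc (α₁ := ℝ) (β₁ := ℝ) (γ₁ := ℝ)
  have h1 : ∫ q : (ℝ × ℝ) × ℝ, h (q.1.1, q.1.2, q.2) = ∫ p : ℝ × ℝ × ℝ, h p :=
    hP.integral_comp (MeasurableEquiv.prodAssoc).measurableEmbedding h
  rw [← h1]
  rw [show ((volume : Measure ((ℝ × ℝ) × ℝ))) = (volume : Measure (ℝ × ℝ)).prod volume from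
    MeasureTheory.Measure.volume_eq_prod _ _]
  exact integral_prod _ (assoc_integrable' hcont hsupp)

lemma int_z_slices {h : ℝ × ℝ × ℝ → ℝ} (hcont : Continuous h)
    (hsupp : HasCompactSupport h) :
    Integrable (fun z : ℝ => ∫ xh : ℝ × ℝ, h (xh.1, xh.2, z)) := by
  exact (assoc_integrable' hcont hsupp).integral_prod_right

lemma int_xh_slices {h : ℝ × ℝ × ℝ → ℝ} (hcont : Continuous h)
    (hsupp : HasCompactSupport h) :
    Integrable (fun xh : ℝ × ℝ => ∫ z : ℝ, h (xh.1, xh.2, z)) := by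
  exact (assoc_integrable' hcont hsupp).integral_prod_left

-- the three partial-derivative functions, as functions on ℝ³
lemma d1fun_eq {u : ℝ × ℝ × ℝ → ℝ} (hu : ContDiff ℝ (⊤ : ℕ∞) u) :
    (fun p : ℝ × ℝ × ℝ => deriv (fun x => u (x, p.2.1, p.2.2)) p.1)
      = fun p => fderiv ℝ u p ((1:ℝ), (0:ℝ), (0:ℝ)) :=
  funext fun p => (d1_hasDerivAt hu p).deriv

lemma d2fun_eq {u : ℝ × ℝ × ℝ → ℝ} (hu : ContDiff ℝ (⊤ : ℕ∞) u) :
    (fun p : ℝ × ℝ × ℝ => deriv (fun y => u (p.1, y, p.2.2)) p.2.1)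
      = fun p => fderiv ℝ u p ((0:ℝ), (1:ℝ), (0:ℝ)) :=
  funext fun p => (d2_hasDerivAt hu p).deriv

lemma d3fun_eq {u : ℝ × ℝ × ℝ → ℝ} (hu : ContDiff ℝ (⊤ : ℕ∞) u) :
    (fun p : ℝ × ℝ × ℝ => deriv (fun z => u (p.1, p.2.1, z)) p.2.2)
      = fun p => fderiv ℝ u p ((0:ℝ), (0:ℝ), (1:ℝ)) :=
  funext fun p => (d3_hasDerivAt hu p).deriv

lemma dfun_cont {u : ℝ × ℝ × ℝ → ℝ} (hu : ContDiff ℝ (⊤ : ℕ∞) u) (v : ℝ × ℝ × ℝ) :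
    Continuous (fun p => fderiv ℝ u p v) :=
  (hu.continuous_fderiv (by simp)).clm_apply continuous_const

lemma dfun_cpt {u : ℝ × ℝ × ℝ → ℝ} (hc : HasCompactSupport u) (v : ℝ × ℝ × ℝ) :
    HasCompactSupport (fun p => fderiv ℝ u p v) :=
  hc.fderiv_apply ℝ v

-- smoothness of slices
lemma contdiff_slice_v {u : ℝ × ℝ × ℝ → ℝ} (hu : ContDiff ℝ (⊤ : ℕ∞) u) (a b : ℝ) :
    ContDiff ℝ (⊤ : ℕ∞) (fun z : ℝ => u (a, b, z)) :=
  hu.comp (contDiff_const.prodMk (contDiff_const.prodMk contDiff_id))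

lemma contdiff_slice_x {u : ℝ × ℝ × ℝ → ℝ} (hu : ContDiff ℝ (⊤ : ℕ∞) u) (b t : ℝ) :
    ContDiff ℝ (⊤ : ℕ∞) (fun x : ℝ => u (x, b, t)) :=
  hu.comp (contDiff_id.prodMk (contDiff_const.prodMk contDiff_const))

lemma contdiff_slice_y {u : ℝ × ℝ × ℝ → ℝ} (hu : ContDiff ℝ (⊤ : ℕ∞) u) (a t : ℝ) :
    ContDiff ℝ (⊤ : ℕ∞) (fun y : ℝ => u (a, y, t)) :=
  hu.comp (contDiff_const.prodMk (contDiff_id.prodMk contDiff_const))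

lemma cont_slice_h {u : ℝ × ℝ × ℝ → ℝ} (hu : Continuous u) (t : ℝ) :
    Continuous (fun xh : ℝ × ℝ => u (xh.1, xh.2, t)) :=
  hu.comp (continuous_fst.prodMk (continuous_snd.prodMk continuous_const))

lemma L6_slice {u : ℝ × ℝ × ℝ → ℝ} (hu : ContDiff ℝ (⊤ : ℕ∞) u) (hc : HasCompactSupport u) (t : ℝ) :
    ∫ xh : ℝ × ℝ, u (xh.1, xh.2, t) ^ 6
      ≤ (9/2) * (∫ xh : ℝ × ℝ, u (xh.1, xh.2, t) ^ 4)
        * ∫ xh : ℝ × ℝ, ((deriv (fun x => u (x, xh.2, t)) xh.1) ^ 2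
            + (deriv (fun y => u (xh.1, y, t)) xh.2) ^ 2) := by
  set f : ℝ × ℝ → ℝ := fun xh => u (xh.1, xh.2, t) with hf_def
  set d1 : ℝ × ℝ → ℝ := fun xh => deriv (fun x => u (x, xh.2, t)) xh.1 with hd1_def
  set d2 : ℝ × ℝ → ℝ := fun xh => deriv (fun y => u (xh.1, y, t)) xh.2 with hd2_def
  have hf_cont : Continuous f := cont_slice_h hu.continuous t
  have hf_cpt : HasCompactSupport f := hcs_slice_h hc t
  -- identify d1, d2 with slices of fderiv-applied functions
  have hd1_eq : d1 = fun xh : ℝ × ℝ => fderiv ℝ u (xh.1, xh.2, t) ((1:ℝ), (0:ℝ), (0:ℝ)) := by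
    funext xh
    exact (d1_hasDerivAt hu (xh.1, xh.2, t)).deriv
  have hd2_eq : d2 = fun xh : ℝ × ℝ => fderiv ℝ u (xh.1, xh.2, t) ((0:ℝ), (1:ℝ), (0:ℝ)) := by
    funext xh
    exact (d2_hasDerivAt hu (xh.1, xh.2, t)).deriv
  have hd1_cont : Continuous d1 := by
    rw [hd1_eq]; exact cont_slice_h (dfun_cont hu _) t
  have hd2_cont : Continuous d2 := by
    rw [hd2_eq]; exact cont_slice_h (dfun_cont hu _) t
  have hd1_cpt : HasCompactSupport d1 := by
    rw [hd1_eq]; exact hcs_slice_h (dfun_cpt hc _) t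
  have hd2_cpt : HasCompactSupport d2 := by
    rw [hd2_eq]; exact hcs_slice_h (dfun_cpt hc _) t
  -- 1D pointwise bounds
  have key1 : ∀ x y : ℝ, |u (x, y, t) ^ 3| ≤ ∫ x' : ℝ, |3 * u (x', y, t) ^ 2 * d1 (x', y)| := by
    intro x y
    have hv : ContDiff ℝ (⊤ : ℕ∞) (fun x' : ℝ => u (x', y, t)) := contdiff_slice_x hu y t
    have hw : ContDiff ℝ 1 (fun x' : ℝ => u (x', y, t) ^ 3) := (hv.pow 3).of_le (by simp)
    have hwc : HasCompactSupport (fun x' : ℝ => u (x', y, t) ^ 3) :=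
      ((hcs_slice_x hc y t).comp_left (g := fun a : ℝ => a ^ 3) (by simp) :)
    have hder : ∀ x' : ℝ, deriv (fun s : ℝ => u (s, y, t) ^ 3) x'
        = 3 * u (x', y, t) ^ 2 * d1 (x', y) := by
      intro x'
      have h1 : HasDerivAt (fun s : ℝ => u (s, y, t)) (d1 (x', y)) x' := by
        rw [hd1_eq]
        exact d1_hasDerivAt hu (x', y, t)
      have := h1.pow 3
      simpa [Pi.pow_def] using this.deriv
    have := my_abs_le_integral_deriv hw hwc x
    simpa [hder] using this
  have key2 : ∀ x y : ℝ, |u (x, y, t) ^ 3| ≤ ∫ y' : ℝ, |3 * u (x, y', t) ^ 2 * d2 (x, y')| := by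
    intro x y
    have hv : ContDiff ℝ (⊤ : ℕ∞) (fun y' : ℝ => u (x, y', t)) := contdiff_slice_y hu x t
    have hw : ContDiff ℝ 1 (fun y' : ℝ => u (x, y', t) ^ 3) := (hv.pow 3).of_le (by simp)
    have hwc : HasCompactSupport (fun y' : ℝ => u (x, y', t) ^ 3) :=
      ((hcs_slice_y hc x t).comp_left (g := fun a : ℝ => a ^ 3) (by simp) :)
    have hder : ∀ y' : ℝ, deriv (fun s : ℝ => u (x, s, t) ^ 3) y'
        = 3 * u (x, y', t) ^ 2 * d2 (x, y') := by
      intro y'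
      have h1 : HasDerivAt (fun s : ℝ => u (x, s, t)) (d2 (x, y')) y' := by
        rw [hd2_eq]
        exact d2_hasDerivAt hu (x, y', t)
      have := h1.pow 3
      simpa [Pi.pow_def] using this.deriv
    have := my_abs_le_integral_deriv hw hwc y
    simpa [hder] using this
  -- the two auxiliary 2D functions
  set H1 : ℝ × ℝ → ℝ := fun xh => |3 * f xh ^ 2 * d1 xh| with hH1_def
  set H2 : ℝ × ℝ → ℝ := fun xh => |3 * f xh ^ 2 * d2 xh| with hH2_def
  have hH1_cont : Continuous H1 := ((continuous_const.mul (hf_cont.pow 2)).mul hd1_cont).abs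
  have hH2_cont : Continuous H2 := ((continuous_const.mul (hf_cont.pow 2)).mul hd2_cont).abs
  have hH1_cpt : HasCompactSupport H1 := (hd1_cpt.mul_left).abs
  have hH2_cpt : HasCompactSupport H2 := (hd2_cpt.mul_left).abs
  have hH1_int : Integrable H1 := hH1_cont.integrable_of_hasCompactSupport hH1_cpt
  have hH2_int : Integrable H2 := hH2_cont.integrable_of_hasCompactSupport hH2_cpt
  have hH1_int' : Integrable H1 ((volume : Measure ℝ).prod volume) := by
    rwa [← MeasureTheory.Measure.volume_eq_prod]
  have hH2_int' : Integrable H2 ((volume : Measure ℝ).prod volume) := by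
    rwa [← MeasureTheory.Measure.volume_eq_prod]
  set F : ℝ → ℝ := fun y => ∫ x : ℝ, H1 (x, y) with hF_def
  set G : ℝ → ℝ := fun x => ∫ y : ℝ, H2 (x, y) with hG_def
  have hF_int : Integrable F := hH1_int'.integral_prod_right
  have hG_int : Integrable G := hH2_int'.integral_prod_left
  -- pointwise product bound
  have h6 : ∀ xh : ℝ × ℝ, f xh ^ 6 ≤ G xh.1 * F xh.2 := by
    intro xh
    have e : f xh ^ 6 = |f xh ^ 3| * |f xh ^ 3| := by
      rw [abs_mul_abs_self]; ring
    rw [e]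
    have h1 := key1 xh.1 xh.2
    have h2 := key2 xh.1 xh.2
    have hFnn : 0 ≤ F xh.2 := integral_nonneg fun _ => abs_nonneg _
    exact mul_le_mul h2 h1 (abs_nonneg _) (le_trans (abs_nonneg _) h2)
  -- integrate
  have hf6_int : Integrable (fun xh : ℝ × ℝ => f xh ^ 6) :=
    (hf_cont.pow 6).integrable_of_hasCompactSupport
      ((hf_cpt.comp_left (g := fun a : ℝ => a ^ 6) (by simp) :))
  have hGF_int : Integrable (fun xh : ℝ × ℝ => G xh.1 * F xh.2) := by
    rw [MeasureTheory.Measure.volume_eq_prod]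
    exact hG_int.mul_prod hF_int
  have step1 : ∫ xh : ℝ × ℝ, f xh ^ 6 ≤ ∫ xh : ℝ × ℝ, G xh.1 * F xh.2 :=
    integral_mono hf6_int hGF_int h6
  have step2 : ∫ xh : ℝ × ℝ, G xh.1 * F xh.2 = (∫ x, G x) * ∫ y, F y := by
    rw [MeasureTheory.Measure.volume_eq_prod]
    exact integral_prod_mul G F
  have eqF : ∫ y, F y = ∫ xh : ℝ × ℝ, H1 xh := by
    rw [hF_def]
    rw [show (volume : Measure (ℝ × ℝ)) = (volume : Measure ℝ).prod volume from
      MeasureTheory.Measure.volume_eq_prod ℝ ℝ]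
    exact (integral_prod_symm H1 hH1_int').symm
  have eqG : ∫ x, G x = ∫ xh : ℝ × ℝ, H2 xh := by
    rw [hG_def]
    rw [show (volume : Measure (ℝ × ℝ)) = (volume : Measure ℝ).prod volume from
      MeasureTheory.Measure.volume_eq_prod ℝ ℝ]
    exact (integral_prod H2 hH2_int').symm
  -- Cauchy–Schwarz on H1 and H2
  have hf4_int : Integrable (fun xh : ℝ × ℝ => f xh ^ 4) :=
    (hf_cont.pow 4).integrable_of_hasCompactSupport
      ((hf_cpt.comp_left (g := fun a : ℝ => a ^ 4) (by simp) :))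
  have hd1sq_int : Integrable (fun xh : ℝ × ℝ => d1 xh ^ 2) :=
    (hd1_cont.pow 2).integrable_of_hasCompactSupport
      ((hd1_cpt.comp_left (g := fun a : ℝ => a ^ 2) (by simp) :))
  have hd2sq_int : Integrable (fun xh : ℝ × ℝ => d2 xh ^ 2) :=
    (hd2_cont.pow 2).integrable_of_hasCompactSupport
      ((hd2_cpt.comp_left (g := fun a : ℝ => a ^ 2) (by simp) :))
  have csH1 : ∫ xh : ℝ × ℝ, H1 xh
      ≤ 3 * (Real.sqrt (∫ xh : ℝ × ℝ, f xh ^ 4) * Real.sqrt (∫ xh : ℝ × ℝ, d1 xh ^ 2)) := by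
    have e : ∀ xh : ℝ × ℝ, H1 xh = 3 * ((fun q => f q ^ 2) xh * (fun q => |d1 q|) xh) := by
      intro xh
      rw [hH1_def]
      simp only [abs_mul]
      rw [abs_of_nonneg (by norm_num : (0:ℝ) ≤ 3), abs_of_nonneg (sq_nonneg _)]
      ring
    rw [integral_congr_ae (Eventually.of_forall e), integral_const_mul]
    have hcs := my_cs (μ := (volume : Measure (ℝ × ℝ)))
      (f := fun q => f q ^ 2) (g := fun q => |d1 q|)
      (fun q => sq_nonneg _) (fun q => abs_nonneg _)
      (hf_cont.pow 2).aestronglyMeasurable hd1_cont.abs.aestronglyMeasurable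
      (by simpa [← pow_mul] using hf4_int)
      (by simpa [sq_abs] using hd1sq_int)
    have e2 : (∫ q : ℝ × ℝ, (f q ^ 2) ^ 2) = ∫ xh : ℝ × ℝ, f xh ^ 4 := by
      congr 1; funext q; ring
    have e3 : (∫ q : ℝ × ℝ, |d1 q| ^ 2) = ∫ xh : ℝ × ℝ, d1 xh ^ 2 := by
      congr 1; funext q; rw [sq_abs]
    rw [e2, e3] at hcs
    linarith
  have csH2 : ∫ xh : ℝ × ℝ, H2 xh
      ≤ 3 * (Real.sqrt (∫ xh : ℝ × ℝ, f xh ^ 4) * Real.sqrt (∫ xh : ℝ × ℝ, d2 xh ^ 2)) := by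
    have e : ∀ xh : ℝ × ℝ, H2 xh = 3 * ((fun q => f q ^ 2) xh * (fun q => |d2 q|) xh) := by
      intro xh
      rw [hH2_def]
      simp only [abs_mul]
      rw [abs_of_nonneg (by norm_num : (0:ℝ) ≤ 3), abs_of_nonneg (sq_nonneg _)]
      ring
    rw [integral_congr_ae (Eventually.of_forall e), integral_const_mul]
    have hcs := my_cs (μ := (volume : Measure (ℝ × ℝ)))
      (f := fun q => f q ^ 2) (g := fun q => |d2 q|)
      (fun q => sq_nonneg _) (fun q => abs_nonneg _)
      (hf_cont.pow 2).aestronglyMeasurable hd2_cont.abs.aestronglyMeasurable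
      (by simpa [← pow_mul] using hf4_int)
      (by simpa [sq_abs] using hd2sq_int)
    have e2 : (∫ q : ℝ × ℝ, (f q ^ 2) ^ 2) = ∫ xh : ℝ × ℝ, f xh ^ 4 := by
      congr 1; funext q; ring
    have e3 : (∫ q : ℝ × ℝ, |d2 q| ^ 2) = ∫ xh : ℝ × ℝ, d2 xh ^ 2 := by
      congr 1; funext q; rw [sq_abs]
    rw [e2, e3] at hcs
    linarith
  -- put everything together
  set I4 := ∫ xh : ℝ × ℝ, f xh ^ 4 with hI4
  set P := ∫ xh : ℝ × ℝ, d1 xh ^ 2 with hP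
  set Q := ∫ xh : ℝ × ℝ, d2 xh ^ 2 with hQ
  have hI4nn : 0 ≤ I4 := integral_nonneg fun _ => by positivity
  have hPnn : 0 ≤ P := integral_nonneg fun _ => sq_nonneg _
  have hQnn : 0 ≤ Q := integral_nonneg fun _ => sq_nonneg _
  have hH1nn : 0 ≤ ∫ xh : ℝ × ℝ, H1 xh := integral_nonneg fun _ => abs_nonneg _
  have hH2nn : 0 ≤ ∫ xh : ℝ × ℝ, H2 xh := integral_nonneg fun _ => abs_nonneg _
  have hPQsum : ∫ xh : ℝ × ℝ, (d1 xh ^ 2 + d2 xh ^ 2) = P + Q :=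
    integral_add hd1sq_int hd2sq_int
  have sqrtmul : Real.sqrt P * Real.sqrt Q ≤ (P + Q) / 2 := by
    nlinarith [sq_nonneg (Real.sqrt P - Real.sqrt Q), Real.sq_sqrt hPnn, Real.sq_sqrt hQnn,
      Real.sqrt_nonneg P, Real.sqrt_nonneg Q]
  have sqI4 : Real.sqrt I4 * Real.sqrt I4 = I4 := Real.mul_self_sqrt hI4nn
  calc ∫ xh : ℝ × ℝ, f xh ^ 6 ≤ (∫ x, G x) * ∫ y, F y := step1.trans step2.le
    _ = (∫ xh : ℝ × ℝ, H2 xh) * ∫ xh : ℝ × ℝ, H1 xh := by rw [eqF, eqG]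
    _ ≤ (3 * (Real.sqrt I4 * Real.sqrt Q)) * (3 * (Real.sqrt I4 * Real.sqrt P)) := by
        apply mul_le_mul csH2 csH1 hH1nn
        positivity
    _ = 9 * (Real.sqrt I4 * Real.sqrt I4) * (Real.sqrt P * Real.sqrt Q) := by ring
    _ = 9 * I4 * (Real.sqrt P * Real.sqrt Q) := by rw [sqI4]
    _ ≤ 9 * I4 * ((P + Q) / 2) := by
        apply mul_le_mul_of_nonneg_left sqrtmul
        positivity
    _ = (9/2) * I4 * (P + Q) := by ring
    _ = (9/2) * I4 * ∫ xh : ℝ × ℝ, (d1 xh ^ 2 + d2 xh ^ 2) := by rw [hPQsum]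

lemma abs_cube_sq (a : ℝ) : (|a| ^ 3) ^ 2 = a ^ 6 := by
  have h : (|a| ^ 3) ^ 2 = |a| ^ 6 := by ring
  rw [h, ← abs_pow]
  exact abs_of_nonneg (by positivity)

/-- Anisotropic estimate `‖u‖²_{L^∞_v L⁴_h} ≲ ‖∂₃u‖_{L²(ℝ³)} ‖∇_h u‖_{L²(ℝ³)}`,
where `‖u‖_{L^∞_v L⁴_h} = sup_{x₃} ‖u(·,·,x₃)‖_{L⁴(ℝ²)}` and `∇_h = (∂₁, ∂₂)`. -/
theorem anisotropic_Linfty_v_L4_h :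
    ∃ C : ℝ, 0 < C ∧ ∀ u : ℝ × ℝ × ℝ → ℝ, ContDiff ℝ (⊤ : ℕ∞) u → HasCompactSupport u →
      ∀ x₃ : ℝ,
        Real.sqrt (∫ xh : ℝ × ℝ, (u (xh.1, xh.2, x₃)) ^ 4)
          ≤ C * Real.sqrt (∫ p : ℝ × ℝ × ℝ, (deriv (fun z => u (p.1, p.2.1, z)) p.2.2) ^ 2)
              * Real.sqrt (∫ p : ℝ × ℝ × ℝ,
                  ((deriv (fun z => u (z, p.2.1, p.2.2)) p.1) ^ 2
                    + (deriv (fun z => u (p.1, z, p.2.2)) p.2.1) ^ 2)) := by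
  refine ⟨9, by norm_num, fun u hu hc x₃ => ?_⟩
  -- partial derivative functions
  set d1f : ℝ × ℝ × ℝ → ℝ := fun p => deriv (fun z => u (z, p.2.1, p.2.2)) p.1 with hd1f_def
  set d2f : ℝ × ℝ × ℝ → ℝ := fun p => deriv (fun z => u (p.1, z, p.2.2)) p.2.1 with hd2f_def
  set d3f : ℝ × ℝ × ℝ → ℝ := fun p => deriv (fun z => u (p.1, p.2.1, z)) p.2.2 with hd3f_def
  have hd1_eq : d1f = fun p => fderiv ℝ u p ((1:ℝ), (0:ℝ), (0:ℝ)) := d1fun_eq hu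
  have hd2_eq : d2f = fun p => fderiv ℝ u p ((0:ℝ), (1:ℝ), (0:ℝ)) := d2fun_eq hu
  have hd3_eq : d3f = fun p => fderiv ℝ u p ((0:ℝ), (0:ℝ), (1:ℝ)) := d3fun_eq hu
  have hd1_cont : Continuous d1f := by rw [hd1_eq]; exact dfun_cont hu _
  have hd2_cont : Continuous d2f := by rw [hd2_eq]; exact dfun_cont hu _
  have hd3_cont : Continuous d3f := by rw [hd3_eq]; exact dfun_cont hu _
  have hd1_cpt : HasCompactSupport d1f := by rw [hd1_eq]; exact dfun_cpt hc _
  have hd2_cpt : HasCompactSupport d2f := by rw [hd2_eq]; exact dfun_cpt hc _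
  have hd3_cpt : HasCompactSupport d3f := by rw [hd3_eq]; exact dfun_cpt hc _
  -- the slice L⁴ norm to the fourth power
  set A : ℝ → ℝ := fun s => ∫ xh : ℝ × ℝ, u (xh.1, xh.2, s) ^ 4 with hA_def
  have hA_nn : ∀ s, 0 ≤ A s := fun s => integral_nonneg fun xh => by positivity
  -- key 3D integrands
  set W : ℝ × ℝ × ℝ → ℝ := fun p => |u p ^ 3 * d3f p| with hW_def
  have hW_cont : Continuous W := ((hu.continuous.pow 3).mul hd3_cont).abs
  have hW_cpt : HasCompactSupport W := (hd3_cpt.mul_left).abs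
  set dh : ℝ × ℝ × ℝ → ℝ := fun p => d1f p ^ 2 + d2f p ^ 2 with hdh_def
  have hdh_cont : Continuous dh := (hd1_cont.pow 2).add (hd2_cont.pow 2)
  have hdh_cpt : HasCompactSupport dh :=
    (((hd1_cpt.comp_left (g := fun a : ℝ => a ^ 2) (by simp) :)).add
      ((hd2_cpt.comp_left (g := fun a : ℝ => a ^ 2) (by simp) :)))
  have hd3sq_cont : Continuous (fun p => d3f p ^ 2) := hd3_cont.pow 2
  have hd3sq_cpt : HasCompactSupport (fun p => d3f p ^ 2) :=
    (hd3_cpt.comp_left (g := fun a : ℝ => a ^ 2) (by simp) :)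
  have hu6_cont : Continuous (fun p => u p ^ 6) := hu.continuous.pow 6
  have hu6_cpt : HasCompactSupport (fun p => u p ^ 6) :=
    (hc.comp_left (g := fun a : ℝ => a ^ 6) (by simp) :)
  -- slice integrals
  set Sx : ℝ → ℝ := fun z => ∫ xh : ℝ × ℝ, u (xh.1, xh.2, z) ^ 6 with hSx_def
  set P : ℝ → ℝ := fun z => ∫ xh : ℝ × ℝ, dh (xh.1, xh.2, z) with hP_def
  set R : ℝ → ℝ := fun z => ∫ xh : ℝ × ℝ, d3f (xh.1, xh.2, z) ^ 2 with hR_def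
  have hSx_int : Integrable Sx := int_z_slices hu6_cont hu6_cpt
  have hP_int : Integrable P := int_z_slices hdh_cont hdh_cpt
  have hR_int : Integrable R := int_z_slices hd3sq_cont hd3sq_cpt
  have hSx_nn : ∀ z, 0 ≤ Sx z := fun z => integral_nonneg fun xh => by positivity
  have hP_nn : ∀ z, 0 ≤ P z := fun z => integral_nonneg fun xh => by positivity
  have hR_nn : ∀ z, 0 ≤ R z := fun z => integral_nonneg fun xh => sq_nonneg _
  -- target quantities
  set D3sq := ∫ p : ℝ × ℝ × ℝ, d3f p ^ 2 with hD3sq_def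
  set Dhsq := ∫ p : ℝ × ℝ × ℝ, dh p with hDhsq_def
  have hD3sq_eq : D3sq = ∫ z, R z := triple_zfirst hd3sq_cont hd3sq_cpt
  have hDhsq_eq : Dhsq = ∫ z, P z := triple_zfirst hdh_cont hdh_cpt
  -- Step A : A s ≤ 4 ∫_z ∫_xh W
  have stepA : ∀ s : ℝ, A s ≤ 4 * ∫ z : ℝ, ∫ xh : ℝ × ℝ, W (xh.1, xh.2, z) := by
    intro s
    have ptA : ∀ xh : ℝ × ℝ, u (xh.1, xh.2, s) ^ 4
        ≤ ∫ z : ℝ, 4 * W (xh.1, xh.2, z) := by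
      intro xh
      set v : ℝ → ℝ := fun z => u (xh.1, xh.2, z) with hv_def
      have hv : ContDiff ℝ (⊤ : ℕ∞) v := contdiff_slice_v hu xh.1 xh.2
      have hw : ContDiff ℝ 1 (fun z => v z ^ 4) := (hv.pow 4).of_le (by simp)
      have hwc : HasCompactSupport (fun z => v z ^ 4) :=
        ((hcs_slice_v hc xh.1 xh.2).comp_left (g := fun a : ℝ => a ^ 4) (by simp) :)
      have hder : ∀ z : ℝ, deriv (fun z' => v z' ^ 4) z = 4 * v z ^ 3 * d3f (xh.1, xh.2, z) := by
        intro z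
        have h1 : HasDerivAt v (d3f (xh.1, xh.2, z)) z := by
          rw [hd3_eq]
          exact d3_hasDerivAt hu (xh.1, xh.2, z)
        have := h1.pow 4
        simpa [Pi.pow_def] using this.deriv
      have habs := my_abs_le_integral_deriv hw hwc s
      have e1 : u (xh.1, xh.2, s) ^ 4 = |v s ^ 4| := by
        rw [abs_of_nonneg (by positivity)]
      have e2 : ∀ z : ℝ, |deriv (fun z' => v z' ^ 4) z| = 4 * W (xh.1, xh.2, z) := by
        intro z
        rw [hder z, hW_def]
        simp only []
        rw [show (4:ℝ) * v z ^ 3 * d3f (xh.1, xh.2, z)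
          = 4 * (u (xh.1, xh.2, z) ^ 3 * d3f (xh.1, xh.2, z)) by rw [hv_def]; ring]
        rw [abs_mul, abs_of_nonneg (by norm_num : (0:ℝ) ≤ 4)]
      calc u (xh.1, xh.2, s) ^ 4 = |v s ^ 4| := e1
        _ ≤ ∫ z, |deriv (fun z' => v z' ^ 4) z| := habs
        _ = ∫ z, 4 * W (xh.1, xh.2, z) := integral_congr_ae (Eventually.of_forall e2)
    have hW4_cont : Continuous (fun p : ℝ × ℝ × ℝ => 4 * W p) := continuous_const.mul hW_cont
    have hW4_cpt : HasCompactSupport (fun p : ℝ × ℝ × ℝ => 4 * W p) := hW_cpt.mul_left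
    have hu4s_int : Integrable (fun xh : ℝ × ℝ => u (xh.1, xh.2, s) ^ 4) :=
      ((cont_slice_h hu.continuous s).pow 4).integrable_of_hasCompactSupport
        (((hcs_slice_h hc s).comp_left (g := fun a : ℝ => a ^ 4) (by simp) :))
    have hrhs_int : Integrable (fun xh : ℝ × ℝ => ∫ z : ℝ, 4 * W (xh.1, xh.2, z)) :=
      int_xh_slices hW4_cont hW4_cpt
    have h1 : A s ≤ ∫ xh : ℝ × ℝ, ∫ z : ℝ, 4 * W (xh.1, xh.2, z) :=
      integral_mono hu4s_int hrhs_int ptA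
    have h2 : ∫ xh : ℝ × ℝ, ∫ z : ℝ, 4 * W (xh.1, xh.2, z)
        = 4 * ∫ z : ℝ, ∫ xh : ℝ × ℝ, W (xh.1, xh.2, z) := by
      rw [← triple_xhfirst hW4_cont hW4_cpt, integral_const_mul,
        triple_zfirst hW_cont hW_cpt]
    linarith [h1, h2.le, h2.ge]
  -- Step B : per-slice Cauchy-Schwarz
  have stepB : ∀ z : ℝ, ∫ xh : ℝ × ℝ, W (xh.1, xh.2, z)
      ≤ Real.sqrt (Sx z) * Real.sqrt (R z) := by
    intro z
    have hWeq : ∀ xh : ℝ × ℝ, W (xh.1, xh.2, z)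
        = (|u (xh.1, xh.2, z)| ^ 3) * |d3f (xh.1, xh.2, z)| := by
      intro xh
      rw [hW_def]
      simp only []
      rw [abs_mul, abs_pow]
    have hcs := my_cs (μ := (volume : Measure (ℝ × ℝ)))
      (f := fun xh : ℝ × ℝ => |u (xh.1, xh.2, z)| ^ 3)
      (g := fun xh : ℝ × ℝ => |d3f (xh.1, xh.2, z)|)
      (fun xh => by positivity) (fun xh => abs_nonneg _)
      (((cont_slice_h hu.continuous z).abs.pow 3).aestronglyMeasurable)
      ((cont_slice_h hd3_cont z).abs.aestronglyMeasurable)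
      (by
        have : Integrable (fun xh : ℝ × ℝ => u (xh.1, xh.2, z) ^ 6) :=
          ((cont_slice_h hu.continuous z).pow 6).integrable_of_hasCompactSupport
            (((hcs_slice_h hc z).comp_left (g := fun a : ℝ => a ^ 6) (by simp) :))
        apply this.congr
        filter_upwards with xh
        rw [abs_cube_sq])
      (by
        have : Integrable (fun xh : ℝ × ℝ => d3f (xh.1, xh.2, z) ^ 2) :=
          ((cont_slice_h hd3_cont z).pow 2).integrable_of_hasCompactSupport
            (((hcs_slice_h hd3_cpt z).comp_left (g := fun a : ℝ => a ^ 2) (by simp) :))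
        apply this.congr
        filter_upwards with xh
        rw [sq_abs])
    have e1 : ∫ xh : ℝ × ℝ, W (xh.1, xh.2, z)
        = ∫ xh : ℝ × ℝ, (|u (xh.1, xh.2, z)| ^ 3) * |d3f (xh.1, xh.2, z)| :=
      integral_congr_ae (Eventually.of_forall hWeq)
    have e2 : (∫ xh : ℝ × ℝ, ((|u (xh.1, xh.2, z)| ^ 3)) ^ 2) = Sx z := by
      rw [hSx_def]
      exact integral_congr_ae (Eventually.of_forall fun xh => abs_cube_sq _)
    have e3 : (∫ xh : ℝ × ℝ, (|d3f (xh.1, xh.2, z)|) ^ 2) = R z := by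
      rw [hR_def]
      exact integral_congr_ae (Eventually.of_forall fun xh => sq_abs _)
    rw [e1]
    rw [e2, e3] at hcs
    exact hcs
  -- Step C : 2D Ladyzhenskaya on slices
  have stepC : ∀ z : ℝ, Sx z ≤ (9/2) * A z * P z := fun z => L6_slice hu hc z
  -- supremum over slices
  have hbdd : BddAbove (Set.range A) := by
    refine ⟨4 * ∫ z : ℝ, ∫ xh : ℝ × ℝ, W (xh.1, xh.2, z), ?_⟩
    rintro _ ⟨s, rfl⟩
    exact stepA s
  set S := sSup (Set.range A) with hS_def
  have hAleS : ∀ s, A s ≤ S := fun s => le_csSup hbdd ⟨s, rfl⟩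
  have hS0 : 0 ≤ S := (hA_nn x₃).trans (hAleS x₃)
  -- main chain
  set K := 4 * Real.sqrt (9/2) * (Real.sqrt Dhsq * Real.sqrt D3sq) with hK_def
  have hK0 : 0 ≤ K := by positivity
  have claim : ∀ s, A s ≤ K * Real.sqrt S := by
    intro s
    have hptw : ∀ z : ℝ, Real.sqrt (Sx z) * Real.sqrt (R z)
        ≤ (Real.sqrt (9/2) * Real.sqrt S) * (Real.sqrt (P z) * Real.sqrt (R z)) := by
      intro z
      have h1 : Real.sqrt (Sx z) ≤ Real.sqrt (9/2) * Real.sqrt S * Real.sqrt (P z) := by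
        calc Real.sqrt (Sx z) ≤ Real.sqrt ((9/2) * A z * P z) := Real.sqrt_le_sqrt (stepC z)
          _ = Real.sqrt (9/2) * Real.sqrt (A z) * Real.sqrt (P z) := by
              rw [Real.sqrt_mul (by positivity), Real.sqrt_mul (by norm_num)]
          _ ≤ Real.sqrt (9/2) * Real.sqrt S * Real.sqrt (P z) := by
              have hm : Real.sqrt (A z) ≤ Real.sqrt S := Real.sqrt_le_sqrt (hAleS z)
              have h2 := mul_le_mul_of_nonneg_left hm (Real.sqrt_nonneg (9/2 : ℝ))
              exact mul_le_mul_of_nonneg_right h2 (Real.sqrt_nonneg _)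
      have hRnn : 0 ≤ Real.sqrt (R z) := Real.sqrt_nonneg _
      calc Real.sqrt (Sx z) * Real.sqrt (R z)
          ≤ (Real.sqrt (9/2) * Real.sqrt S * Real.sqrt (P z)) * Real.sqrt (R z) :=
            mul_le_mul_of_nonneg_right h1 hRnn
        _ = (Real.sqrt (9/2) * Real.sqrt S) * (Real.sqrt (P z) * Real.sqrt (R z)) := by ring
    -- integrability over z
    have hg1_int : Integrable (fun z : ℝ => ∫ xh : ℝ × ℝ, W (xh.1, xh.2, z)) :=
      int_z_slices hW_cont hW_cpt
    have hsqSx_meas : AEStronglyMeasurable (fun z : ℝ => Real.sqrt (Sx z)) volume :=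
      Real.continuous_sqrt.comp_aestronglyMeasurable hSx_int.aestronglyMeasurable
    have hsqP_meas : AEStronglyMeasurable (fun z : ℝ => Real.sqrt (P z)) volume :=
      Real.continuous_sqrt.comp_aestronglyMeasurable hP_int.aestronglyMeasurable
    have hsqR_meas : AEStronglyMeasurable (fun z : ℝ => Real.sqrt (R z)) volume :=
      Real.continuous_sqrt.comp_aestronglyMeasurable hR_int.aestronglyMeasurable
    have hsqSx2_int : Integrable (fun z : ℝ => Real.sqrt (Sx z) ^ 2) :=
      hSx_int.congr (Eventually.of_forall fun z => (Real.sq_sqrt (hSx_nn z)).symm)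
    have hsqP2_int : Integrable (fun z : ℝ => Real.sqrt (P z) ^ 2) :=
      hP_int.congr (Eventually.of_forall fun z => (Real.sq_sqrt (hP_nn z)).symm)
    have hsqR2_int : Integrable (fun z : ℝ => Real.sqrt (R z) ^ 2) :=
      hR_int.congr (Eventually.of_forall fun z => (Real.sq_sqrt (hR_nn z)).symm)
    have hSR_int : Integrable (fun z : ℝ => Real.sqrt (Sx z) * Real.sqrt (R z)) :=
      my_int_mul hsqSx_meas hsqR_meas hsqSx2_int hsqR2_int
    have hPR_int : Integrable (fun z : ℝ => Real.sqrt (P z) * Real.sqrt (R z)) :=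
      my_int_mul hsqP_meas hsqR_meas hsqP2_int hsqR2_int
    -- Cauchy-Schwarz in z
    have hcsz : ∫ z : ℝ, Real.sqrt (P z) * Real.sqrt (R z)
        ≤ Real.sqrt Dhsq * Real.sqrt D3sq := by
      have hcs := my_cs (μ := (volume : Measure ℝ))
        (f := fun z => Real.sqrt (P z)) (g := fun z => Real.sqrt (R z))
        (fun z => Real.sqrt_nonneg _) (fun z => Real.sqrt_nonneg _)
        hsqP_meas hsqR_meas hsqP2_int hsqR2_int
      have e1 : (∫ z : ℝ, Real.sqrt (P z) ^ 2) = Dhsq := by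
        rw [hDhsq_eq]
        exact integral_congr_ae (Eventually.of_forall fun z => Real.sq_sqrt (hP_nn z))
      have e2 : (∫ z : ℝ, Real.sqrt (R z) ^ 2) = D3sq := by
        rw [hD3sq_eq]
        exact integral_congr_ae (Eventually.of_forall fun z => Real.sq_sqrt (hR_nn z))
      rwa [e1, e2] at hcs
    -- chain
    have c1 : ∫ z : ℝ, ∫ xh : ℝ × ℝ, W (xh.1, xh.2, z)
        ≤ ∫ z : ℝ, Real.sqrt (Sx z) * Real.sqrt (R z) :=
      integral_mono hg1_int hSR_int stepB
    have c2 : ∫ z : ℝ, Real.sqrt (Sx z) * Real.sqrt (R z)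
        ≤ ∫ z : ℝ, (Real.sqrt (9/2) * Real.sqrt S) * (Real.sqrt (P z) * Real.sqrt (R z)) :=
      integral_mono hSR_int (hPR_int.const_mul _) hptw
    have c3 : ∫ z : ℝ, (Real.sqrt (9/2) * Real.sqrt S) * (Real.sqrt (P z) * Real.sqrt (R z))
        = (Real.sqrt (9/2) * Real.sqrt S) * ∫ z : ℝ, Real.sqrt (P z) * Real.sqrt (R z) :=
      integral_const_mul _ _
    have c4 : (Real.sqrt (9/2) * Real.sqrt S) * (∫ z : ℝ, Real.sqrt (P z) * Real.sqrt (R z))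
        ≤ (Real.sqrt (9/2) * Real.sqrt S) * (Real.sqrt Dhsq * Real.sqrt D3sq) :=
      mul_le_mul_of_nonneg_left hcsz (by positivity)
    have := stepA s
    have final : A s ≤ 4 * ((Real.sqrt (9/2) * Real.sqrt S) * (Real.sqrt Dhsq * Real.sqrt D3sq)) := by
      nlinarith [c1, c2, c3.le, c3.ge, c4]
    calc A s ≤ 4 * ((Real.sqrt (9/2) * Real.sqrt S) * (Real.sqrt Dhsq * Real.sqrt D3sq)) := final
      _ = K * Real.sqrt S := by rw [hK_def]; ring
  -- conclude via the supremum
  have hSleK : S ≤ K * Real.sqrt S := by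
    rw [hS_def]
    refine csSup_le ⟨A 0, ⟨0, rfl⟩⟩ ?_
    rintro _ ⟨s, rfl⟩
    exact claim s
  have hsqrtS_le : Real.sqrt S ≤ K := by
    rcases hS0.eq_or_lt with h | h
    · rw [← h, Real.sqrt_zero]
      exact hK0
    · have h1 : Real.sqrt S * Real.sqrt S = S := Real.mul_self_sqrt hS0
      have h2 : 0 < Real.sqrt S := Real.sqrt_pos.2 h
      have h3 : Real.sqrt S * Real.sqrt S ≤ K * Real.sqrt S := by rw [h1]; exact hSleK
      exact (mul_le_mul_iff_of_pos_right h2).mp h3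
  have hKle : K ≤ 9 * Real.sqrt D3sq * Real.sqrt Dhsq := by
    have h92 : Real.sqrt (9/2 : ℝ) ≤ 9/4 := by
      nlinarith [Real.sq_sqrt (by norm_num : (0:ℝ) ≤ 9/2), Real.sqrt_nonneg (9/2 : ℝ)]
    rw [hK_def]
    have hd3nn : 0 ≤ Real.sqrt D3sq := Real.sqrt_nonneg _
    have hdhnn : 0 ≤ Real.sqrt Dhsq := Real.sqrt_nonneg _
    nlinarith [mul_nonneg hdhnn hd3nn]
  have hfinal : Real.sqrt (A x₃) ≤ 9 * Real.sqrt D3sq * Real.sqrt Dhsq :=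
    ((Real.sqrt_le_sqrt (hAleS x₃)).trans hsqrtS_le).trans hKle
  exact hfinal
end

section
/- The function F(t) = ∫₀ᵗ 2^{3j/2} e^{−c2^{2j}(t−t')} t'^{−1/2} dt' satisfies ‖F‖_{L⁴(ℝ⁺)} ≲ 1 uniformly in j ∈ ℤ. -/
/-!
Write `a = c·2^{2j}`; the inner integral is `2^{3j/2} D_a(t)` with
`D_a(t) = ∫₀ᵗ e^{-a(t-s)} s^{-1/2} ds`. Dropping the exponential gives `D_a(t) ≤ 2√t`;
splitting at `t/2` (where either `e^{-a(t-s)} ≤ e^{-at/2} ≤ 2/(at)` or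
`s^{-1/2} ≤ (t/2)^{-1/2}`) gives `D_a(t) ≤ 3√2/(a√t)`. Integrating the fourth power of the
smaller bound, with the crossover at `t ≍ 1/a`, yields `∫₀^∞ D_a⁴ ≤ 144√2/a³`, and the
prefactor `2^{6j} = (2^{2j})³` cancels the `j`-dependence exactly.
-/

open Real MeasureTheory Set

lemma exp_neg_le_inv {x : ℝ} (hx : 0 < x) : exp (-x) ≤ x⁻¹ := by
  rw [exp_neg]
  exact inv_anti₀ hx (by linarith [add_one_le_exp x])

lemma sqrt_pow_four {t : ℝ} (ht : 0 ≤ t) : √t ^ 4 = t ^ 2 := by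
  rw [show 4 = 2 * 2 from rfl, pow_mul, sq_sqrt ht]

lemma rpow_neg_half_eq_inv_sqrt {x : ℝ} (hx : 0 ≤ x) : x ^ (-(1 : ℝ) / 2) = (√x)⁻¹ := by
  rw [neg_div, rpow_neg hx, sqrt_eq_rpow]

lemma integral_rpow_neg_half (t : ℝ) : ∫ s in (0)..t, s ^ (-(1 : ℝ) / 2) = 2 * √t := by
  rw [integral_rpow (Or.inl (by norm_num)), zero_rpow (by norm_num), sqrt_eq_rpow]
  norm_num
  ring

lemma integral_exp_neg_mul_sub_le {a : ℝ} (ha : 0 < a) (s t : ℝ) :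
    ∫ x in s..t, exp (-(a * (t - x))) ≤ a⁻¹ := by
  have hderiv : ∀ x ∈ uIcc s t, HasDerivAt (fun x => exp (-(a * (t - x))) / a)
      (exp (-(a * (t - x)))) x := by
    intro x _
    have hlin : HasDerivAt (fun x => -(a * (t - x))) a x := by
      simpa using (((hasDerivAt_id x).const_sub t).const_mul a).fun_neg
    simpa [ha.ne'] using hlin.exp.div_const a
  rw [intervalIntegral.integral_eq_sub_of_hasDerivAt hderiv
    (Continuous.intervalIntegrable (by fun_prop) _ _), sub_self, mul_zero, neg_zero, exp_zero,
    one_div]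
  linarith [div_pos (exp_pos (-(a * (t - s)))) ha]

section SqrtProfile

variable {A B : ℝ}

lemma min_mul_sqrt_div_sqrt_nonneg (hA : 0 ≤ A) (hB : 0 ≤ B) (t : ℝ) :
    0 ≤ min (A * √t) (B / √t) :=
  le_min (by positivity) (by positivity)

lemma min_mul_sqrt_div_sqrt_pow_four_le_left (hA : 0 ≤ A) (hB : 0 ≤ B) {t : ℝ}
    (ht : 0 ≤ t) :
    min (A * √t) (B / √t) ^ 4 ≤ A ^ 4 * t ^ 2 :=
  calc min (A * √t) (B / √t) ^ 4 ≤ (A * √t) ^ 4 :=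
        pow_le_pow_left₀ (min_mul_sqrt_div_sqrt_nonneg hA hB t) (min_le_left _ _) 4
    _ = A ^ 4 * t ^ 2 := by rw [mul_pow, sqrt_pow_four ht]

lemma min_mul_sqrt_div_sqrt_pow_four_le_right (hA : 0 ≤ A) (hB : 0 ≤ B) {t : ℝ}
    (ht : 0 < t) :
    min (A * √t) (B / √t) ^ 4 ≤ B ^ 4 * t ^ (-2 : ℝ) :=
  calc min (A * √t) (B / √t) ^ 4 ≤ (B / √t) ^ 4 :=
        pow_le_pow_left₀ (min_mul_sqrt_div_sqrt_nonneg hA hB t) (min_le_right _ _) 4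
    _ = B ^ 4 * t ^ (-2 : ℝ) := by
        rw [div_pow, sqrt_pow_four ht.le, rpow_neg ht.le, rpow_two, div_eq_mul_inv]

lemma integrableOn_Ioi_min_mul_sqrt_div_sqrt_pow_four (hA : 0 ≤ A) (hB : 0 ≤ B) :
    IntegrableOn (fun t => min (A * √t) (B / √t) ^ 4) (Ioi 0) := by
  have hmeas : AEStronglyMeasurable (fun t => min (A * √t) (B / √t) ^ 4) volume := by
    fun_prop
  rw [← Ioc_union_Ioi_eq_Ioi zero_le_one]
  refine IntegrableOn.union ?_ ?_
  · refine Integrable.mono'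
      (by fun_prop : Continuous fun t : ℝ => A ^ 4 * t ^ 2).integrableOn_Ioc hmeas.restrict
      ((ae_restrict_iff' measurableSet_Ioc).2 (ae_of_all _ fun t ht => ?_))
    rw [norm_of_nonneg (by positivity)]
    exact min_mul_sqrt_div_sqrt_pow_four_le_left hA hB ht.1.le
  · refine Integrable.mono'
      ((integrableOn_Ioi_rpow_of_lt (a := -2) (by norm_num) one_pos).const_mul (B ^ 4))
      hmeas.restrict ((ae_restrict_iff' measurableSet_Ioi).2 (ae_of_all _ fun t ht => ?_))
    rw [norm_of_nonneg (by positivity)]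
    exact min_mul_sqrt_div_sqrt_pow_four_le_right hA hB (one_pos.trans ht)

lemma integral_Ioi_min_mul_sqrt_div_sqrt_pow_four_le (hA : 0 < A) (hB : 0 < B) :
    ∫ t in Ioi 0, min (A * √t) (B / √t) ^ 4 ≤ 4 / 3 * A * B ^ 3 := by
  set T := B / A with hT_def
  have hT : 0 < T := div_pos hB hA
  have hint := integrableOn_Ioi_min_mul_sqrt_div_sqrt_pow_four hA.le hB.le
  have hleft : ∫ t in Ioc 0 T, min (A * √t) (B / √t) ^ 4 ≤ A ^ 4 * T ^ 3 / 3 := by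
    calc _ ≤ ∫ t in Ioc 0 T, A ^ 4 * t ^ 2 :=
          setIntegral_mono_on (hint.mono_set Ioc_subset_Ioi_self)
            (by fun_prop : Continuous fun t : ℝ => A ^ 4 * t ^ 2).integrableOn_Ioc
            measurableSet_Ioc fun t ht =>
              min_mul_sqrt_div_sqrt_pow_four_le_left hA.le hB.le ht.1.le
      _ = A ^ 4 * T ^ 3 / 3 := by
          rw [← intervalIntegral.integral_of_le hT.le, intervalIntegral.integral_const_mul,
            integral_pow]
          ring
  have hright : ∫ t in Ioi T, min (A * √t) (B / √t) ^ 4 ≤ B ^ 4 / T := by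
    calc _ ≤ ∫ t in Ioi T, B ^ 4 * t ^ (-2 : ℝ) :=
          setIntegral_mono_on (hint.mono_set (Ioi_subset_Ioi hT.le))
            ((integrableOn_Ioi_rpow_of_lt (by norm_num) hT).const_mul _) measurableSet_Ioi
            fun t ht => min_mul_sqrt_div_sqrt_pow_four_le_right hA.le hB.le (hT.trans ht)
      _ = B ^ 4 / T := by
          rw [integral_const_mul, integral_Ioi_rpow_of_lt (by norm_num) hT]
          norm_num [rpow_neg_one, div_eq_mul_inv]
  rw [← Ioc_union_Ioi_eq_Ioi hT.le,
    setIntegral_union (Ioc_disjoint_Ioi le_rfl) measurableSet_Ioi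
      (hint.mono_set Ioc_subset_Ioi_self) (hint.mono_set (Ioi_subset_Ioi hT.le))]
  calc _ ≤ A ^ 4 * T ^ 3 / 3 + B ^ 4 / T := add_le_add hleft hright
    _ = 4 / 3 * A * B ^ 3 := by
        rw [hT_def]
        field_simp
        ring

end SqrtProfile

noncomputable def duhamelInvSqrt (a t : ℝ) : ℝ :=
  ∫ s in (0)..t, exp (-(a * (t - s))) * s ^ (-(1 : ℝ) / 2)

lemma intervalIntegrable_exp_mul_rpow_neg_half (a t u v : ℝ) :
    IntervalIntegrable (fun s => exp (-(a * (t - s))) * s ^ (-(1 : ℝ) / 2)) volume u v :=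
  (intervalIntegral.intervalIntegrable_rpow' (by norm_num)).continuousOn_mul (by fun_prop)

lemma duhamelInvSqrt_nonneg (a : ℝ) {t : ℝ} (ht : 0 ≤ t) : 0 ≤ duhamelInvSqrt a t :=
  intervalIntegral.integral_nonneg ht fun s hs => by
    have := rpow_nonneg hs.1 (-(1 : ℝ) / 2)
    positivity

lemma duhamelInvSqrt_le_two_mul_sqrt {a t : ℝ} (ha : 0 ≤ a) (ht : 0 ≤ t) :
    duhamelInvSqrt a t ≤ 2 * √t := by
  rw [← integral_rpow_neg_half]
  refine intervalIntegral.integral_mono_on ht (intervalIntegrable_exp_mul_rpow_neg_half ..)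
    (intervalIntegral.intervalIntegrable_rpow' (by norm_num)) fun s hs => ?_
  have hexp : exp (-(a * (t - s))) ≤ 1 := exp_le_one_iff.2 (by nlinarith [hs.2])
  exact mul_le_of_le_one_left (rpow_nonneg hs.1 _) hexp

lemma duhamelInvSqrt_le_div_sqrt {a t : ℝ} (ha : 0 < a) (ht : 0 < t) :
    duhamelInvSqrt a t ≤ 3 * √2 / a / √t := by
  set u := t / 2 with hu_def
  have hu : 0 < u := half_pos ht
  have hfar : ∫ s in (0)..u, exp (-(a * (t - s))) * s ^ (-(1 : ℝ) / 2)
      ≤ exp (-(a * u)) * (2 * √u) := by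
    calc _ ≤ ∫ s in (0)..u, exp (-(a * u)) * s ^ (-(1 : ℝ) / 2) := by
          refine intervalIntegral.integral_mono_on hu.le
            (intervalIntegrable_exp_mul_rpow_neg_half ..)
            ((intervalIntegral.intervalIntegrable_rpow' (by norm_num)).const_mul _)
            fun s hs => mul_le_mul_of_nonneg_right ?_ (rpow_nonneg hs.1 _)
          exact exp_le_exp.2 (by nlinarith [hs.2])
      _ = _ := by rw [intervalIntegral.integral_const_mul, integral_rpow_neg_half]
  have hnear : ∫ s in u..t, exp (-(a * (t - s))) * s ^ (-(1 : ℝ) / 2) ≤ (√u)⁻¹ * a⁻¹ := by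
    calc _ ≤ ∫ s in u..t, (√u)⁻¹ * exp (-(a * (t - s))) := by
          refine intervalIntegral.integral_mono_on (by linarith)
            (intervalIntegrable_exp_mul_rpow_neg_half ..)
            (Continuous.intervalIntegrable (by fun_prop) _ _) fun s hs => ?_
          rw [mul_comm, rpow_neg_half_eq_inv_sqrt (hu.le.trans hs.1)]
          gcongr
          exact hs.1
      _ ≤ _ := by
          rw [intervalIntegral.integral_const_mul]
          gcongr
          exact integral_exp_neg_mul_sub_le ha u t
  have hsqrt_u : √t = √2 * √u := by
    rw [← sqrt_mul zero_le_two, hu_def]; ring_nf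
  have hsq : √u ^ 2 = u := sq_sqrt hu.le
  have hexp := exp_neg_le_inv (mul_pos ha hu)
  calc duhamelInvSqrt a t
      = (∫ s in (0)..u, exp (-(a * (t - s))) * s ^ (-(1 : ℝ) / 2))
        + ∫ s in u..t, exp (-(a * (t - s))) * s ^ (-(1 : ℝ) / 2) :=
        (intervalIntegral.integral_add_adjacent_intervals
          (intervalIntegrable_exp_mul_rpow_neg_half ..)
          (intervalIntegrable_exp_mul_rpow_neg_half ..)).symm
    _ ≤ (a * u)⁻¹ * (2 * √u) + (√u)⁻¹ * a⁻¹ :=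
        add_le_add (hfar.trans (mul_le_mul_of_nonneg_right hexp (by positivity))) hnear
    _ = 3 * √2 / a / √t := by
        rw [hsqrt_u]
        field_simp
        linear_combination 2 * hsq

lemma integral_Ioi_duhamelInvSqrt_pow_four_le {a : ℝ} (ha : 0 < a) :
    ∫ t in Ioi 0, duhamelInvSqrt a t ^ 4 ≤ 144 * √2 / a ^ 3 := by
  have hB : 0 < 3 * √2 / a := by positivity
  have hmajor : ∀ t ∈ Ioi (0 : ℝ),
      duhamelInvSqrt a t ^ 4 ≤ min (2 * √t) (3 * √2 / a / √t) ^ 4 := fun t ht =>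
    pow_le_pow_left₀ (duhamelInvSqrt_nonneg a ht.le)
      (le_min (duhamelInvSqrt_le_two_mul_sqrt ha.le ht.le) (duhamelInvSqrt_le_div_sqrt ha ht)) 4
  calc _ ≤ ∫ t in Ioi 0, min (2 * √t) (3 * √2 / a / √t) ^ 4 :=
        integral_mono_of_nonneg (ae_of_all _ fun t => by positivity)
          (integrableOn_Ioi_min_mul_sqrt_div_sqrt_pow_four zero_le_two hB.le)
          ((ae_restrict_iff' measurableSet_Ioi).2 (ae_of_all _ hmajor))
    _ ≤ 4 / 3 * 2 * (3 * √2 / a) ^ 3 :=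
        integral_Ioi_min_mul_sqrt_div_sqrt_pow_four_le two_pos hB
    _ = 144 * √2 / a ^ 3 := by
        have h3 : √2 ^ 3 = 2 * √2 := by rw [pow_succ, sq_sqrt zero_le_two]
        rw [div_pow, mul_pow, h3]
        ring

lemma two_rpow_three_mul_div_two_pow_four (j : ℤ) :
    ((2 : ℝ) ^ (3 * (j : ℝ) / 2)) ^ 4 = ((2 : ℝ) ^ (2 * j)) ^ 3 := by
  rw [← rpow_natCast, ← rpow_mul zero_le_two, ← zpow_natCast, ← zpow_mul, ← rpow_intCast]
  push_cast
  ring_nf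

/-- The function `F(t) = ∫₀ᵗ 2^{3j/2} e^{-c 2^{2j}(t-t')} t'^{-1/2} dt'` satisfies
`‖F‖_{L⁴(ℝ⁺)} ≲ 1` uniformly in `j ∈ ℤ`. -/
theorem heat_convolution_L4_bound (c : ℝ) (hc : 0 < c) :
    ∃ C : ℝ, 0 < C ∧ ∀ j : ℤ,
      (∫ t in Ioi (0 : ℝ),
          (∫ t' in Ioo (0 : ℝ) t,
            (2 : ℝ) ^ (3 * (j : ℝ) / 2) * Real.exp (-c * (2 : ℝ) ^ (2 * j) * (t - t'))
              * t' ^ (-(1 : ℝ) / 2)) ^ 4) ^ ((1 : ℝ) / 4) ≤ C := by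
  refine ⟨(144 * √2 / c ^ 3) ^ ((1 : ℝ) / 4), by positivity, fun j => ?_⟩
  set p : ℝ := 2 ^ (3 * (j : ℝ) / 2)
  set a : ℝ := c * 2 ^ (2 * j) with ha_def
  have ha : 0 < a := by positivity
  have hF : ∀ t ∈ Ioi (0 : ℝ),
      (∫ t' in Ioo 0 t, p * exp (-c * 2 ^ (2 * j) * (t - t')) * t' ^ (-(1 : ℝ) / 2)) ^ 4
        = p ^ 4 * duhamelInvSqrt a t ^ 4 := by
    intro t ht
    rw [duhamelInvSqrt, intervalIntegral.integral_of_le ht.le, integral_Ioc_eq_integral_Ioo,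
      ← mul_pow, ← integral_const_mul]
    simp only [ha_def, neg_mul, mul_assoc]
  rw [setIntegral_congr_fun measurableSet_Ioi hF, integral_const_mul]
  refine rpow_le_rpow (by positivity) ?_ (by norm_num)
  calc p ^ 4 * ∫ t in Ioi 0, duhamelInvSqrt a t ^ 4 ≤ p ^ 4 * (144 * √2 / a ^ 3) := by
        gcongr
        exact integral_Ioi_duhamelInvSqrt_pow_four_le ha
    _ = 144 * √2 / c ^ 3 := by
        rw [two_rpow_three_mul_div_two_pow_four, ha_def, mul_pow]
        field_simp
end
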